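/- arXiv:1812.08472 — 6 statements merged into one kernel-verified Lean document; each statement's English description precedes it below -/
import Mathlib

section
/- Let D be a Fréchet space in a rigged Hilbert space D ⊂ H ⊂ D* and let ω : X → D* be a Bessel distribution map (i.e., x ↦ ⟨f,ω_x⟩ ∈ L²(X,μ) for all f ∈ D). Then for every f ∈ D the map g ↦ ∫_X ⟨f,ω_x⟩⟨ω_x,g⟩dμ defines a continuous conjugate-linear functional on D, i.e., an element S_ω f ∈ D*, and the map S_ω : D → D* is continuous. -/
open Filter Topology Set Pointwise

theorem myBaire {E : Type*} [AddCommGroup E] [UniformSpace E] [IsUniformAddGroup E]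
    [CompleteSpace E] [TopologicalSpace.MetrizableSpace E] : BaireSpace E := by
  haveI : (uniformity E).IsCountablyGenerated := by
    rw [uniformity_eq_comap_nhds_zero]
    exact Filter.comap.isCountablyGenerated _ _
  letI : PseudoMetricSpace E := UniformSpace.pseudoMetricSpace E
  infer_instance

theorem mem_closure_sub' {E : Type*} [AddCommGroup E] [TopologicalSpace E]
    [IsTopologicalAddGroup E] {s t : Set E} {a b : E}
    (ha : a ∈ closure s) (hb : b ∈ closure t) : a - b ∈ closure (s - t) := by
  have h1 : (a, b) ∈ closure (s ×ˢ t) := by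
    rw [closure_prod_eq]; exact ⟨ha, hb⟩
  have h2 := image_closure_subset_closure_image
    (f := fun p : E × E => p.1 - p.2) (s := s ×ˢ t) (by fun_prop)
  have h3 : (fun p : E × E => p.1 - p.2) '' (s ×ˢ t) = s - t := by
    rw [Set.image_prod]; exact (Set.image2_sub ..)
  rw [h3] at h2
  exact h2 ⟨(a, b), h1, rfl⟩

theorem myCGT {E F : Type*} [AddCommGroup E] [Module ℂ E] [UniformSpace E] [IsUniformAddGroup E]
    [ContinuousSMul ℂ E] [CompleteSpace E] [TopologicalSpace.MetrizableSpace E]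
    [NormedAddCommGroup F] [NormedSpace ℂ F] [CompleteSpace F]
    (T : E →ₗ[ℂ] F) (hT : IsClosed {p : E × F | T p.1 = p.2}) : Continuous T := by
  haveI : BaireSpace E := myBaire
  set S : ℝ → Set E := fun r => T ⁻¹' Metric.ball 0 r with hS
  set A : ℝ → Set E := fun r => closure (S r) with hA
  -- Step A : A r is a neighborhood of 0
  have stepA : ∀ r : ℝ, 0 < r → A r ∈ 𝓝 (0 : E) := by
    intro r hr
    have hcover : (⋃ n : ℕ, ((n + 1 : ℕ) : ℂ) • A (r / 2)) = Set.univ := by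
      refine Set.eq_univ_of_forall fun f => ?_
      obtain ⟨n, hn⟩ := exists_nat_gt (2 * ‖T f‖ / r)
      refine Set.mem_iUnion.2 ⟨n, ?_⟩
      have hne : ((n + 1 : ℕ) : ℂ) ≠ 0 := Nat.cast_ne_zero.2 (Nat.succ_ne_zero n)
      have hne' : ((n : ℂ) + 1) ≠ 0 := by exact_mod_cast hne
      refine ⟨((n + 1 : ℕ) : ℂ)⁻¹ • f, subset_closure ?_, by
        push_cast
        rw [smul_smul, mul_inv_cancel₀ hne', one_smul]⟩
      simp only [hS, Set.mem_preimage, Metric.mem_ball, dist_zero_right, map_smul, norm_smul]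
      have hnorm : ‖((n + 1 : ℕ) : ℂ)⁻¹‖ = ((n : ℝ) + 1)⁻¹ := by
        rw [norm_inv]
        norm_cast
      rw [hnorm]
      have hpos : (0:ℝ) < (n : ℝ) + 1 := by positivity
      rw [inv_mul_lt_iff₀ hpos]
      have h2 : 2 * ‖T f‖ / r < (n : ℝ) + 1 := lt_of_lt_of_le hn (by linarith)
      rw [div_lt_iff₀ hr] at h2
      nlinarith [norm_nonneg (T f)]
    have hclosed : ∀ n : ℕ, IsClosed (((n + 1 : ℕ) : ℂ) • A (r / 2)) := by
      intro n
      exact isClosed_closure.smul_of_ne_zero (by exact_mod_cast Nat.succ_ne_zero n)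
    obtain ⟨n, x, hx⟩ := nonempty_interior_of_iUnion_of_closed hclosed hcover
    have hne : ((n + 1 : ℕ) : ℂ) ≠ 0 := by exact_mod_cast Nat.succ_ne_zero n
    rw [interior_smul₀ hne] at hx
    obtain ⟨y, hy, rfl⟩ := hx
    -- 0 ∈ interior A(r/2) - interior A(r/2) ⊆ A r
    have hsub : interior (A (r / 2)) - interior (A (r / 2)) ⊆ A r := by
      rintro z ⟨a, ha, b, hb, rfl⟩
      have ha' : a ∈ closure (S (r / 2)) := interior_subset ha
      have hb' : b ∈ closure (S (r / 2)) := interior_subset hb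
      have := mem_closure_sub' ha' hb'
      refine closure_mono ?_ this
      rintro w ⟨u, hu, v, hv, rfl⟩
      simp only [hS, Set.mem_preimage, Metric.mem_ball, dist_zero_right] at hu hv ⊢
      rw [map_sub]
      calc ‖T u - T v‖ ≤ ‖T u‖ + ‖T v‖ := norm_sub_le _ _
        _ < r / 2 + r / 2 := add_lt_add hu hv
        _ = r := by ring
    refine Filter.mem_of_superset ?_ hsub
    have : IsOpen (interior (A (r / 2)) - interior (A (r / 2))) :=
      isOpen_interior.sub_right
    refine this.mem_nhds ?_
    exact ⟨y, hy, y, hy, sub_self y⟩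
  -- Step B : A r ⊆ {f | ‖T f‖ ≤ 2r}
  have stepB : ∀ r : ℝ, 0 < r → ∀ f ∈ A r, ‖T f‖ ≤ 2 * r := by
    intro r hr f hf
    obtain ⟨U, hU⟩ := (𝓝 (0 : E)).exists_antitone_basis
    have key : ∀ (k : ℕ) (g : E), g ∈ A (r / 2 ^ k) →
        ∃ g' : E, g' ∈ A (r / 2 ^ (k + 1)) ∧ g' ∈ U k ∧ ‖T (g - g')‖ < r / 2 ^ k := by
      intro k g hg
      have hW : A (r / 2 ^ (k + 1)) ∩ U k ∈ 𝓝 (0 : E) :=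
        Filter.inter_mem (stepA _ (by positivity)) (hU.1.mem_of_mem trivial)
      have hN : (fun y => g - y) ⁻¹' (A (r / 2 ^ (k + 1)) ∩ U k) ∈ 𝓝 g := by
        have hc : ContinuousAt (fun y => g - y) g := by fun_prop
        have : g - g = 0 := sub_self g
        exact hc.preimage_mem_nhds (by rwa [this])
      obtain ⟨s, hs1, hs2⟩ := (mem_closure_iff_nhds.1 hg) _ hN
      exact ⟨g - s, hs1.1, hs1.2, by
        simpa only [sub_sub_cancel] using
          (show ‖T s‖ < r / 2 ^ k by
            simpa [hS, dist_zero_right] using hs2)⟩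
    choose Fn hF1 hF2 hF3 using key
    have hfA : f ∈ A (r / 2 ^ 0) := by simpa using hf
    let R : (k : ℕ) → {g : E // g ∈ A (r / 2 ^ k)} := fun k =>
      Nat.rec ⟨f, hfA⟩ (fun k ih => ⟨Fn k ih.1 ih.2, hF1 k ih.1 ih.2⟩) k
    have hRsucc : ∀ k, (R (k + 1)).1 = Fn k (R k).1 (R k).2 := fun k => rfl
    have hRU : ∀ k, (R (k + 1)).1 ∈ U k := fun k => by
      rw [hRsucc]; exact hF2 k (R k).1 (R k).2
    set s : ℕ → E := fun k => (R k).1 - (R (k + 1)).1 with hsdef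
    have hsnorm : ∀ k, ‖T (s k)‖ < r / 2 ^ k := fun k => by
      exact hF3 k (R k).1 (R k).2
    -- R k → 0
    have hRlim : Tendsto (fun k => (R k).1) atTop (𝓝 (0 : E)) := by
      intro V hV
      obtain ⟨i, hi⟩ := hU.1.mem_iff.1 hV
      rw [Filter.mem_map]
      filter_upwards [Filter.eventually_ge_atTop (i + 1)] with k hk
      obtain ⟨m, rfl⟩ : ∃ m, k = m + 1 := ⟨k - 1, by omega⟩
      exact hi.2 (hU.2 (by omega) (hRU m))
    -- partial sums of s
    have hsum_tel : ∀ N : ℕ, ∑ k ∈ Finset.range N, s k = f - (R N).1 := by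
      intro N
      rw [Finset.sum_range_sub' (fun k => (R k).1)]
      rfl
    have hglim : Tendsto (fun N => ∑ k ∈ Finset.range N, s k) atTop (𝓝 f) := by
      simp only [hsum_tel]
      simpa using tendsto_const_nhds.sub hRlim
    have hnorms : Summable (fun k => ‖T (s k)‖) := by
      refine Summable.of_nonneg_of_le (fun k => norm_nonneg _) (fun k => ?_)
        (summable_geometric_two' (2 * r))
      refine (hsnorm k).le.trans (le_of_eq (by ring))
    have hTsummable : Summable (fun k => T (s k)) := hnorms.of_norm
    set y := ∑' k, T (s k) with hy
    have hTlim : Tendsto (fun N => T (∑ k ∈ Finset.range N, s k)) atTop (𝓝 y) := by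
      have := hTsummable.hasSum.tendsto_sum_nat
      simpa [map_sum] using this
    have hTf : T f = y := by
      have hmem : ∀ᶠ N in atTop, ((∑ k ∈ Finset.range N, s k, T (∑ k ∈ Finset.range N, s k)) : E × F)
          ∈ {p : E × F | T p.1 = p.2} := Filter.Eventually.of_forall fun N => rfl
      have := hT.mem_of_tendsto (hglim.prodMk_nhds hTlim) hmem
      exact this
    rw [hTf, hy]
    calc ‖∑' k, T (s k)‖ ≤ ∑' k, ‖T (s k)‖ := norm_tsum_le_tsum_norm hnorms
      _ ≤ ∑' k : ℕ, 2 * r / 2 / 2 ^ k := by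
          refine Summable.tsum_le_tsum (fun k => (hsnorm k).le.trans (le_of_eq (by ring)))
            hnorms (summable_geometric_two' _)
      _ = 2 * r := tsum_geometric_two' _
  -- Step C : continuity
  refine continuous_of_continuousAt_zero T.toAddMonoidHom ?_
  rw [ContinuousAt]
  simp only [LinearMap.toAddMonoidHom_coe, map_zero]
  rw [Metric.nhds_basis_ball.tendsto_right_iff]
  intro ε hε
  filter_upwards [stepA (ε / 4) (by positivity)] with g hg
  have := stepB (ε / 4) (by positivity) g hg
  simp only [Metric.mem_ball, dist_zero_right]
  linarith

open MeasureTheory ComplexConjugate Filter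

/-- If `ω` is a Bessel distribution map on the Fréchet domain `D` of a rigged
Hilbert space, then `g ↦ ∫ ⟨f,ω_x⟩⟨ω_x,g⟩dμ` is a continuous conjugate-linear functional
on `D` for each `f`, and the resulting frame operator `S_ω : D → D*` is continuous. -/
theorem stmt3
    {D : Type*} [AddCommGroup D] [Module ℂ D] [UniformSpace D] [IsUniformAddGroup D]
    [ContinuousSMul ℂ D] [CompleteSpace D] [TopologicalSpace.MetrizableSpace D]
    [Module ℝ D] [IsScalarTower ℝ ℂ D] [LocallyConvexSpace ℝ D]
    {H : Type*} [NormedAddCommGroup H] [InnerProductSpace ℂ H] [CompleteSpace H]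
    (j : D →L[ℂ] H) (hj : Function.Injective j) (hjd : DenseRange j)
    {X : Type*} [MeasurableSpace X] (μ : Measure X) [SigmaFinite μ]
    (ω : X → (D →SL[starRingEnd ℂ] ℂ))
    (hmeas : ∀ f : D, Measurable fun x => (ω x) f)
    (hL2 : ∀ f : D, MemLp (fun x => (ω x) f) 2 μ) :
    ∃ S : D →L[ℂ] (D →SL[starRingEnd ℂ] ℂ),
      ∀ f g : D, (S f) g = ∫ x, conj ((ω x) f) * (ω x) g ∂μ := by
  classical
  have hL2c : ∀ f : D, MemLp (fun x => conj ((ω x) f)) 2 μ := fun f =>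
    (hL2 f).of_le (RCLike.continuous_conj.comp_aestronglyMeasurable (hL2 f).1)
      (Filter.Eventually.of_forall fun x => by simp)
  let T0 : D →ₗ[ℂ] Lp ℂ 2 μ :=
    { toFun := fun f => (hL2c f).toLp _
      map_add' := fun f g => by
        refine Lp.ext ?_
        filter_upwards [MemLp.coeFn_toLp (hL2c (f + g)), Lp.coeFn_add ((hL2c f).toLp _)
          ((hL2c g).toLp _), MemLp.coeFn_toLp (hL2c f), MemLp.coeFn_toLp (hL2c g)]
          with x h1 h2 h3 h4
        rw [h1, h2, Pi.add_apply, h3, h4, map_add, map_add]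
      map_smul' := fun c f => by
        refine Lp.ext ?_
        filter_upwards [MemLp.coeFn_toLp (hL2c (c • f)), Lp.coeFn_smul c ((hL2c f).toLp _),
          MemLp.coeFn_toLp (hL2c f)] with x h1 h2 h3
        rw [h1, RingHom.id_apply, h2, Pi.smul_apply, h3, map_smulₛₗ]
        simp [smul_eq_mul, mul_comm] }
  have hT0 : ∀ f : D, (T0 f : X → ℂ) =ᵐ[μ] fun x => conj ((ω x) f) := fun f =>
    (hL2c f).coeFn_toLp
  haveI : Fact ((1 : ENNReal) ≤ 2) := ⟨by norm_num⟩
  have hclosed : IsClosed {p : D × Lp ℂ 2 μ | T0 p.1 = p.2} := by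
    refine IsSeqClosed.isClosed ?_
    intro x p hx hp
    have hfst : Tendsto (fun n => (x n).1) atTop (𝓝 p.1) := (continuous_fst.tendsto p).comp hp
    have hsnd : Tendsto (fun n => (x n).2) atTop (𝓝 p.2) := (continuous_snd.tendsto p).comp hp
    have hsnd' : Tendsto (fun n => T0 (x n).1) atTop (𝓝 p.2) := hsnd.congr fun n => (hx n).symm
    have hmeas2 := tendstoInMeasure_of_tendsto_Lp hsnd'
    obtain ⟨ns, hns, hae⟩ := hmeas2.exists_seq_tendsto_ae
    refine Lp.ext ?_
    have hcoe : ∀ᵐ y ∂μ, ∀ i : ℕ, (T0 ((x (ns i)).1) : X → ℂ) y = conj ((ω y) ((x (ns i)).1)) := by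
      rw [ae_all_iff]; intro i; exact hT0 _
    filter_upwards [hae, hcoe, hT0 p.1] with y h1 h2 h3
    have h4 : Tendsto (fun i => conj ((ω y) ((x (ns i)).1))) atTop (𝓝 (conj ((ω y) p.1))) := by
      have h5 := ((ω y).continuous.tendsto p.1).comp (hfst.comp hns.tendsto_atTop)
      exact (RCLike.continuous_conj.tendsto _).comp h5
    have h6 : Tendsto (fun i => (T0 ((x (ns i)).1) : X → ℂ) y) atTop (𝓝 (conj ((ω y) p.1))) :=
      h4.congr fun i => (h2 i).symm
    rw [h3]
    exact tendsto_nhds_unique h6 h1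
  have hTcont : Continuous T0 := myCGT T0 hclosed
  let T : D →L[ℂ] Lp ℂ 2 μ := ⟨T0, hTcont⟩
  let conjSL : ℂ →SL[starRingEnd ℂ] ℂ :=
    { toLinearMap :=
        { toFun := fun z => conj z
          map_add' := fun a b => by simp
          map_smul' := fun c z => by simp [smul_eq_mul] }
      cont := RCLike.continuous_conj }
  let Φ : Lp ℂ 2 μ →L[ℂ] (D →SL[starRingEnd ℂ] ℂ) :=
    (ContinuousLinearMap.postcomp D conjSL).comp
      ((ContinuousLinearMap.precomp ℂ T).comp (innerSL ℂ))
  refine ⟨Φ.comp T, fun f g => ?_⟩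
  have h1 : ((Φ.comp T) f) g = conj (inner ℂ (T f) (T g) : ℂ) := rfl
  rw [h1, L2.inner_def]
  simp_rw [RCLike.inner_apply]
  rw [← integral_conj]
  refine integral_congr_ae ?_
  filter_upwards [hT0 f, hT0 g] with x hf hg
  change conj ((T0 g : X → ℂ) x * conj ((T0 f : X → ℂ) x)) = _
  rw [hf, hg]
  simp [map_mul, mul_comm]
end

section
/- Let ω : X → D* be a distribution frame: A‖f‖² ≤ ∫_X |⟨f,ω_x⟩|²dμ ≤ B‖f‖² for all f ∈ D with 0 < A ≤ B. Then the bounded extension Ŝ_ω of the frame operator to H satisfies A‖f‖ ≤ ‖Ŝ_ω f‖ ≤ B‖f‖ for all f ∈ H, and Ŝ_ω is self-adjoint with a bounded everywhere-defined inverse on H. -/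
open MeasureTheory ComplexConjugate

/-- If `ω` is a distribution frame with bounds `0 < A ≤ B`, then the bounded
extension `Ŝ_ω` of the frame operator to `H` satisfies `A‖f‖ ≤ ‖Ŝ_ω f‖ ≤ B‖f‖` on `H`,
is self-adjoint, and has a bounded everywhere-defined inverse. -/
theorem stmt6
    {D : Type*} [AddCommGroup D] [Module ℂ D] [TopologicalSpace D] [IsTopologicalAddGroup D]
    [ContinuousSMul ℂ D]
    {H : Type*} [NormedAddCommGroup H] [InnerProductSpace ℂ H] [CompleteSpace H]
    (j : D →L[ℂ] H) (hj : Function.Injective j) (hjd : DenseRange j)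
    {X : Type*} [MeasurableSpace X] (μ : Measure X) [SigmaFinite μ]
    (ω : X → (D →SL[starRingEnd ℂ] ℂ))
    (hmeas : ∀ f : D, Measurable fun x => (ω x) f)
    (hL2 : ∀ f : D, MemLp (fun x => (ω x) f) 2 μ)
    (A B : ℝ) (hA : 0 < A) (hAB : A ≤ B)
    (hframe : ∀ f : D, A * ‖j f‖ ^ 2 ≤ ∫ x, ‖(ω x) f‖ ^ 2 ∂μ ∧
        ∫ x, ‖(ω x) f‖ ^ 2 ∂μ ≤ B * ‖j f‖ ^ 2)
    (S : H →L[ℂ] H)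
    (hS : ∀ f g : D, (inner ℂ (j g) (S (j f)) : ℂ) = ∫ x, conj ((ω x) f) * (ω x) g ∂μ) :
    (∀ h : H, A * ‖h‖ ≤ ‖S h‖ ∧ ‖S h‖ ≤ B * ‖h‖) ∧
    IsSelfAdjoint S ∧
    ∃ Sinv : H →L[ℂ] H, S.comp Sinv = ContinuousLinearMap.id ℂ H ∧
      Sinv.comp S = ContinuousLinearMap.id ℂ H := by
  -- quadratic form identity on the dense range
  have hQ : ∀ f : D, (inner ℂ (j f) (S (j f)) : ℂ) = ((∫ x, ‖(ω x) f‖ ^ 2 ∂μ : ℝ) : ℂ) := by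
    intro f
    rw [hS f f]
    have hpt : ∀ x, conj ((ω x) f) * (ω x) f = ((‖(ω x) f‖ ^ 2 : ℝ) : ℂ) := fun x => by
      rw [RCLike.conj_mul]; norm_cast
    simp_rw [hpt]
    exact integral_ofReal
  -- symmetry on the dense range
  have hsymD : ∀ f g : D, (inner ℂ (S (j f)) (j g) : ℂ) = inner ℂ (j f) (S (j g)) := by
    intro f g
    rw [← inner_conj_symm (S (j f)) (j g), hS f g, ← integral_conj, hS g f]
    congr 1
    funext x
    simp [mul_comm]
  -- symmetry on all of H
  have hsym : ∀ x y : H, (inner ℂ (S x) y : ℂ) = inner ℂ x (S y) := by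
    have hc : IsClosed {q : H × H | (inner ℂ (S q.1) q.2 : ℂ) = inner ℂ q.1 (S q.2)} :=
      isClosed_eq ((S.continuous.comp continuous_fst).inner continuous_snd)
        (continuous_fst.inner (S.continuous.comp continuous_snd))
    intro x y
    exact hjd.induction_on₂ hc hsymD x y
  have hsa : IsSelfAdjoint S :=
    ContinuousLinearMap.isSelfAdjoint_iff_isSymmetric.mpr fun x y => hsym x y
  -- quadratic bounds on all of H
  have hbound : ∀ h : H, A * ‖h‖ ^ 2 ≤ (inner ℂ h (S h) : ℂ).re ∧
      (inner ℂ h (S h) : ℂ).re ≤ B * ‖h‖ ^ 2 := by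
    have hc : IsClosed {h : H | A * ‖h‖ ^ 2 ≤ (inner ℂ h (S h) : ℂ).re ∧
        (inner ℂ h (S h) : ℂ).re ≤ B * ‖h‖ ^ 2} := by
      have h1 : Continuous fun h : H => (inner ℂ h (S h) : ℂ).re :=
        Complex.continuous_re.comp (continuous_id.inner S.continuous)
      have h2 : Continuous fun h : H => A * ‖h‖ ^ 2 :=
        continuous_const.mul (continuous_norm.pow 2)
      have h3 : Continuous fun h : H => B * ‖h‖ ^ 2 :=
        continuous_const.mul (continuous_norm.pow 2)
      exact (isClosed_le h2 h1).inter (isClosed_le h1 h3)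
    intro h
    refine hjd.induction_on h hc fun f => ?_
    have hre : (inner ℂ (j f) (S (j f)) : ℂ).re = ∫ x, ‖(ω x) f‖ ^ 2 ∂μ := by
      rw [hQ f]; exact Complex.ofReal_re _
    exact ⟨by rw [hre]; exact (hframe f).1, by rw [hre]; exact (hframe f).2⟩
  -- lower norm bound
  have hlow : ∀ h : H, A * ‖h‖ ≤ ‖S h‖ := by
    intro h
    rcases eq_or_ne h 0 with rfl | hne
    · simp
    · have hpos : 0 < ‖h‖ := norm_pos_iff.mpr hne
      have h1 : A * ‖h‖ ^ 2 ≤ ‖h‖ * ‖S h‖ := by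
        refine ((hbound h).1.trans ?_)
        have hr1 : (inner ℂ h (S h) : ℂ).re ≤ ‖(inner ℂ h (S h) : ℂ)‖ :=
          (Complex.re_le_norm _)
        exact hr1.trans (norm_inner_le_norm h (S h))
      nlinarith
  -- upper norm bound via the Loewner order / C*-algebra
  have hposS : (0 : H →L[ℂ] H) ≤ S := by
    rw [ContinuousLinearMap.nonneg_iff_isPositive]
    refine ⟨fun x y => hsym x y, fun x => ?_⟩
    rw [ContinuousLinearMap.reApplyInnerSelf_apply]
    have h1 : (inner ℂ (S x) x : ℂ) = inner ℂ x (S x) := hsym x x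
    have h2 := (hbound x).1
    have h3 : (0:ℝ) ≤ A * ‖x‖ ^ 2 := by positivity
    calc (0:ℝ) ≤ (inner ℂ x (S x) : ℂ).re := le_trans h3 h2
      _ = RCLike.re (inner ℂ (S x) x : ℂ) := by rw [h1]; rfl
  have hupper : ‖S‖ ≤ B := by
    rw [CStarAlgebra.norm_le_iff_le_algebraMap S (hA.le.trans hAB) hposS,
      ContinuousLinearMap.le_def]
    constructor
    · exact ContinuousLinearMap.isSelfAdjoint_iff_isSymmetric.mp ((IsSelfAdjoint.algebraMap _ (IsSelfAdjoint.all B)).sub hsa)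
    · intro x
      rw [ContinuousLinearMap.reApplyInnerSelf_apply]
      have h1 : ((algebraMap ℝ (H →L[ℂ] H) B) x) = (B : ℂ) • x := by
        rw [Algebra.algebraMap_eq_smul_one, ContinuousLinearMap.smul_apply,
          ContinuousLinearMap.one_apply]
        exact (RCLike.real_smul_eq_coe_smul (K := ℂ) B x)
      have h2 : (inner ℂ x x : ℂ).re = ‖x‖ ^ 2 := by
        rw [inner_self_eq_norm_sq_to_K (𝕜 := ℂ) x]
        norm_cast
      have h3 : (inner ℂ (S x) x : ℂ) = inner ℂ x (S x) := hsym x x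
      have h4 : (inner ℂ ((algebraMap ℝ (H →L[ℂ] H) B - S) x) x : ℂ).re
          = B * ‖x‖ ^ 2 - (inner ℂ x (S x) : ℂ).re := by
        rw [ContinuousLinearMap.sub_apply, inner_sub_left, h1, inner_smul_left,
          Complex.conj_ofReal, h3, Complex.sub_re, Complex.re_ofReal_mul, h2]
      show (0:ℝ) ≤ (inner ℂ ((algebraMap ℝ (H →L[ℂ] H) B - S) x) x : ℂ).re
      rw [h4]
      have := (hbound x).2
      linarith
  have hub : ∀ h : H, ‖S h‖ ≤ B * ‖h‖ := fun h =>
    (S.le_opNorm h).trans (mul_le_mul_of_nonneg_right hupper (norm_nonneg h))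
  refine ⟨fun h => ⟨hlow h, hub h⟩, hsa, ?_⟩
  -- invertibility
  have hinj : LinearMap.ker (S : H →ₗ[ℂ] H) = ⊥ := by
    rw [LinearMap.ker_eq_bot']
    intro h hh
    have := hlow h
    rw [show S h = 0 from hh, norm_zero] at this
    have : ‖h‖ ≤ 0 := by nlinarith
    simpa [norm_le_zero_iff] using this
  have hanti : AntilipschitzWith (⟨A, hA.le⟩ : NNReal)⁻¹ S := by
    refine ContinuousLinearMap.antilipschitz_of_bound S fun x => ?_
    have h6 : ‖x‖ ≤ ‖S x‖ / A := (le_div_iff₀' hA).mpr (hlow x)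
    show ‖x‖ ≤ A⁻¹ * ‖S x‖
    simpa [NNReal.coe_inv, div_eq_inv_mul] using h6
  have hclosed : IsClosed (LinearMap.range (S : H →ₗ[ℂ] H) : Set H) :=
    hanti.isClosed_range S.uniformContinuous
  haveI : CompleteSpace (LinearMap.range (S : H →ₗ[ℂ] H) : Submodule ℂ H) :=
    hclosed.completeSpace_coe
  have horth : (LinearMap.range (S : H →ₗ[ℂ] H) : Submodule ℂ H)ᗮ = ⊥ := by
    rw [Submodule.eq_bot_iff]
    intro k hk
    have h0 : (inner ℂ (S k) k : ℂ) = 0 := hk (S k) (LinearMap.mem_range_self _ k)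
    have h1 : (inner ℂ k (S k) : ℂ) = 0 := by rw [← hsym k k, h0]
    have h2 := (hbound k).1
    rw [h1] at h2
    simp only [Complex.zero_re] at h2
    have : ‖k‖ ^ 2 ≤ 0 := by nlinarith
    have : ‖k‖ = 0 := by nlinarith [norm_nonneg k, sq_nonneg ‖k‖]
    simpa [norm_eq_zero] using this
  have hsurj : LinearMap.range (S : H →ₗ[ℂ] H) = ⊤ := Submodule.orthogonal_eq_bot_iff.mp horth
  let e := ContinuousLinearEquiv.ofBijective S hinj hsurj
  have he : ∀ x, e x = S x := fun x => rfl
  refine ⟨(e.symm : H →L[ℂ] H), ?_, ?_⟩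
  · ext x
    simp only [ContinuousLinearMap.comp_apply, ContinuousLinearEquiv.coe_coe,
      ContinuousLinearMap.id_apply]
    rw [← he (e.symm x), e.apply_symm_apply]
  · ext x
    simp only [ContinuousLinearMap.comp_apply, ContinuousLinearEquiv.coe_coe,
      ContinuousLinearMap.id_apply]
    rw [← he x, e.symm_apply_apply]
end

section
/- Let ζ : X → D* be a Gel'fand distribution basis and M : D* → D* a weakly continuous linear map with adjoint M× : D → D. Define ω_x := M ζ_x. Then for every f ∈ D, ∫_X |⟨f,ω_x⟩|²dμ = ‖M× f‖². Consequently: ω is a bounded Bessel map iff M× is bounded in the Hilbert norm; ω is a Parseval distribution frame iff M× is isometric (‖M×f‖ = ‖f‖ for all f ∈ D); and ω is a distribution frame iff M× and its inverse on Ran M× are norm-continuous. -/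
open MeasureTheory ComplexConjugate

/-- For a Gel'fand distribution basis `ζ` and a weakly continuous
`M : D* → D*` with adjoint `M× : D → D`, the map `ω_x := M ζ_x` satisfies
`∫ |⟨f,ω_x⟩|²dμ = ‖M×f‖²`; consequently `ω` is a bounded Bessel map iff `M×` is bounded,
a Parseval distribution frame iff `M×` is isometric, and a distribution frame iff `M×`
and its inverse on its range are norm-continuous. -/
theorem stmt15
    {D : Type*} [AddCommGroup D] [Module ℂ D] [TopologicalSpace D] [IsTopologicalAddGroup D]
    [ContinuousSMul ℂ D]
    {H : Type*} [NormedAddCommGroup H] [InnerProductSpace ℂ H] [CompleteSpace H]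
    (j : D →L[ℂ] H) (hj : Function.Injective j) (hjd : DenseRange j)
    {X : Type*} [MeasurableSpace X] (μ : Measure X) [SigmaFinite μ]
    (ζ : X → (D →SL[starRingEnd ℂ] ℂ))
    (hmeas : ∀ f : D, Measurable fun x => (ζ x) f)
    (hL2 : ∀ f : D, MemLp (fun x => (ζ x) f) 2 μ)
    (hPars : ∀ f : D, ∫ x, ‖(ζ x) f‖ ^ 2 ∂μ = ‖j f‖ ^ 2)
    (hIndep : ∀ ξ : X → ℂ, AEMeasurable ξ μ →
      (∀ g : D, Integrable (fun x => ξ x * conj ((ζ x) g)) μ) →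
      (∀ g : D, ∫ x, ξ x * conj ((ζ x) g) ∂μ = 0) → ξ =ᵐ[μ] 0)
    (M : (D →SL[starRingEnd ℂ] ℂ) →ₗ[ℂ] (D →SL[starRingEnd ℂ] ℂ))
    (Mx : D →L[ℂ] D)
    (hadj : ∀ (F : D →SL[starRingEnd ℂ] ℂ) (f : D), (M F) f = F (Mx f))
    (ω : X → (D →SL[starRingEnd ℂ] ℂ)) (hω : ∀ x, ω x = M (ζ x)) :
    (∀ f : D, ∫ x, ‖(ω x) f‖ ^ 2 ∂μ = ‖j (Mx f)‖ ^ 2) ∧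
    ((∃ B : ℝ, 0 < B ∧ ∀ f : D, ∫ x, ‖(ω x) f‖ ^ 2 ∂μ ≤ B * ‖j f‖ ^ 2) ↔
      (∃ C : ℝ, 0 < C ∧ ∀ f : D, ‖j (Mx f)‖ ≤ C * ‖j f‖)) ∧
    ((∀ f : D, ∫ x, ‖(ω x) f‖ ^ 2 ∂μ = ‖j f‖ ^ 2) ↔
      (∀ f : D, ‖j (Mx f)‖ = ‖j f‖)) ∧
    ((∃ A B : ℝ, 0 < A ∧ 0 < B ∧ ∀ f : D,
        A * ‖j f‖ ^ 2 ≤ ∫ x, ‖(ω x) f‖ ^ 2 ∂μ ∧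
        ∫ x, ‖(ω x) f‖ ^ 2 ∂μ ≤ B * ‖j f‖ ^ 2) ↔
      ((∃ C : ℝ, 0 < C ∧ ∀ f : D, ‖j (Mx f)‖ ≤ C * ‖j f‖) ∧
       (∃ c : ℝ, 0 < c ∧ ∀ f : D, c * ‖j f‖ ≤ ‖j (Mx f)‖))) := by

  have key : ∀ f : D, ∫ x, ‖(ω x) f‖ ^ 2 ∂μ = ‖j (Mx f)‖ ^ 2 := by
    intro f
    simp only [hω, hadj]
    exact hPars (Mx f)
  have sqiff : ∀ a b : ℝ, 0 ≤ a → 0 ≤ b → (a ^ 2 ≤ b ^ 2 ↔ a ≤ b) := by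
    intro a b ha hb
    exact pow_le_pow_iff_left₀ ha hb (by norm_num)
  refine ⟨key, ?_, ?_, ?_⟩
  · constructor
    · rintro ⟨B, hB, h⟩
      refine ⟨Real.sqrt B, Real.sqrt_pos.2 hB, fun f => ?_⟩
      have := h f
      rw [key f] at this
      have h2 : ‖j (Mx f)‖ ^ 2 ≤ (Real.sqrt B * ‖j f‖) ^ 2 := by
        rw [mul_pow, Real.sq_sqrt hB.le]; exact this
      exact (sqiff _ _ (norm_nonneg _) (mul_nonneg (Real.sqrt_nonneg _) (norm_nonneg _))).1 h2
    · rintro ⟨C, hC, h⟩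
      refine ⟨C ^ 2, by positivity, fun f => ?_⟩
      rw [key f]
      calc ‖j (Mx f)‖ ^ 2 ≤ (C * ‖j f‖) ^ 2 :=
            pow_le_pow_left₀ (norm_nonneg _) (h f) 2
        _ = C ^ 2 * ‖j f‖ ^ 2 := by ring
  · constructor
    · intro h f
      have := h f
      rw [key f] at this
      exact (sq_eq_sq₀ (norm_nonneg _) (norm_nonneg _)).1 (by simpa [sq] using this)
    · intro h f
      rw [key f, h f]
  · constructor
    · rintro ⟨A, B, hA, hB, h⟩
      constructor
      · refine ⟨Real.sqrt B, Real.sqrt_pos.2 hB, fun f => ?_⟩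
        have := (h f).2
        rw [key f] at this
        have h2 : ‖j (Mx f)‖ ^ 2 ≤ (Real.sqrt B * ‖j f‖) ^ 2 := by
          rw [mul_pow, Real.sq_sqrt hB.le]; exact this
        exact (sqiff _ _ (norm_nonneg _) (mul_nonneg (Real.sqrt_nonneg _) (norm_nonneg _))).1 h2
      · refine ⟨Real.sqrt A, Real.sqrt_pos.2 hA, fun f => ?_⟩
        have := (h f).1
        rw [key f] at this
        have h2 : (Real.sqrt A * ‖j f‖) ^ 2 ≤ ‖j (Mx f)‖ ^ 2 := by
          rw [mul_pow, Real.sq_sqrt hA.le]; exact this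
        exact (sqiff _ _ (mul_nonneg (Real.sqrt_nonneg _) (norm_nonneg _)) (norm_nonneg _)).1 h2
    · rintro ⟨⟨C, hC, hCu⟩, ⟨c, hc, hcl⟩⟩
      refine ⟨c ^ 2, C ^ 2, by positivity, by positivity, fun f => ?_⟩
      rw [key f]
      constructor
      · calc c ^ 2 * ‖j f‖ ^ 2 = (c * ‖j f‖) ^ 2 := by ring
          _ ≤ ‖j (Mx f)‖ ^ 2 :=
            pow_le_pow_left₀ (mul_nonneg hc.le (norm_nonneg _)) (hcl f) 2
      · calc ‖j (Mx f)‖ ^ 2 ≤ (C * ‖j f‖) ^ 2 :=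
            pow_le_pow_left₀ (norm_nonneg _) (hCu f) 2
          _ = C ^ 2 * ‖j f‖ ^ 2 := by ring
end

section
/- Let ζ : X → D* be a Gel'fand distribution basis, α : X → ℂ measurable, and suppose that for every f ∈ D, x ↦ α(x)⟨f,ζ_x⟩ belongs to L²(X,μ). Define A f := ∫_X α(x)⟨f,ζ_x⟩ζ_x dμ and A† g := ∫_X conj(α(x))⟨g,ζ_x⟩ζ_x dμ for f,g ∈ D, assuming these weak integrals lie in H. Then ⟨Af,g⟩ = ⟨f,A†g⟩ for all f,g ∈ D, hence A (as an operator in H with domain D) is closable; moreover A is bounded on D if and only if α ∈ L^∞(X,μ). -/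
open MeasureTheory ComplexConjugate Filter Topology ENNReal

/-- If `‖⟪u,v⟫‖ ≤ M‖u‖` for all `u` in a dense set, then `‖v‖ ≤ M`. -/
lemma stmt16_dense_inner_le {E : Type*} [NormedAddCommGroup E] [InnerProductSpace ℂ E]
    {s : Set E} (hs : Dense s) (v : E) {M : ℝ} (hM : 0 ≤ M)
    (h : ∀ u ∈ s, ‖(inner ℂ u v : ℂ)‖ ≤ M * ‖u‖) : ‖v‖ ≤ M := by
  obtain ⟨u, hu, hlim⟩ := mem_closure_iff_seq_limit.mp (hs v)
  have h1 : Tendsto (fun n => ‖(inner ℂ (u n) v : ℂ)‖) atTop (𝓝 ‖(inner ℂ v v : ℂ)‖) :=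
    (hlim.inner tendsto_const_nhds).norm
  have h2 : Tendsto (fun n => M * ‖u n‖) atTop (𝓝 (M * ‖v‖)) := (hlim.norm).const_mul M
  have hle : ‖(inner ℂ v v : ℂ)‖ ≤ M * ‖v‖ :=
    le_of_tendsto_of_tendsto' h1 h2 fun n => h _ (hu n)
  have hvv : (inner ℂ v v : ℂ) = (‖v‖ : ℂ) ^ 2 := inner_self_eq_norm_sq_to_K v
  rw [hvv] at hle
  simp only [norm_pow, Complex.norm_real, Real.norm_eq_abs, abs_norm] at hle
  by_contra hc
  push_neg at hc
  nlinarith [norm_nonneg v]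

set_option maxHeartbeats 2000000 in
/-- For a Gel'fand distribution basis `ζ` and measurable `α` with
`α·⟨f,ζ⟩ ∈ L²` for all `f ∈ D`, the diagonal operators `Af = ∫ α(x)⟨f,ζ_x⟩ζ_x dμ`,
`A†g = ∫ conj(α(x))⟨g,ζ_x⟩ζ_x dμ` (assumed to take values in `H`) satisfy
`⟨Af,g⟩ = ⟨f,A†g⟩`, hence `A` is closable; and `A` is bounded on `D` iff `α ∈ L^∞`. -/
theorem stmt16
    {D : Type*} [AddCommGroup D] [Module ℂ D] [TopologicalSpace D] [IsTopologicalAddGroup D]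
    [ContinuousSMul ℂ D]
    {H : Type*} [NormedAddCommGroup H] [InnerProductSpace ℂ H] [CompleteSpace H]
    (j : D →L[ℂ] H) (hj : Function.Injective j) (hjd : DenseRange j)
    {X : Type*} [MeasurableSpace X] (μ : Measure X) [SigmaFinite μ]
    (ζ : X → (D →SL[starRingEnd ℂ] ℂ))
    (hmeas : ∀ f : D, Measurable fun x => (ζ x) f)
    (hL2 : ∀ f : D, MemLp (fun x => (ζ x) f) 2 μ)
    (hPars : ∀ f : D, ∫ x, ‖(ζ x) f‖ ^ 2 ∂μ = ‖j f‖ ^ 2)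
    (hIndep : ∀ ξ : X → ℂ, AEMeasurable ξ μ →
      (∀ g : D, Integrable (fun x => ξ x * conj ((ζ x) g)) μ) →
      (∀ g : D, ∫ x, ξ x * conj ((ζ x) g) ∂μ = 0) → ξ =ᵐ[μ] 0)
    (α : X → ℂ) (hα : Measurable α)
    (hαL2 : ∀ f : D, MemLp (fun x => α x * conj ((ζ x) f)) 2 μ)
    (A Adag : D → H)
    (hA : ∀ f g : D,
      (inner ℂ (j g) (A f) : ℂ) = ∫ x, α x * conj ((ζ x) f) * (ζ x) g ∂μ)
    (hAdag : ∀ f g : D,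
      (inner ℂ (j g) (Adag f) : ℂ) = ∫ x, conj (α x) * conj ((ζ x) f) * (ζ x) g ∂μ) :
    (∀ f g : D, (inner ℂ (j g) (A f) : ℂ) = (inner ℂ (Adag g) (j f) : ℂ)) ∧
    (∀ (f : ℕ → D) (h : H),
      Filter.Tendsto (fun n => j (f n)) Filter.atTop (nhds 0) →
      Filter.Tendsto (fun n => A (f n)) Filter.atTop (nhds h) → h = 0) ∧
    ((∃ C : ℝ, 0 < C ∧ ∀ f : D, ‖A f‖ ≤ C * ‖j f‖) ↔ MemLp α ⊤ μ) := by
  classical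
  -- Part 1 : the adjoint relation
  have part1 : ∀ f g : D, (inner ℂ (j g) (A f) : ℂ) = (inner ℂ (Adag g) (j f) : ℂ) := by
    intro f g
    rw [hA f g, ← inner_conj_symm, hAdag g f, ← integral_conj]
    refine integral_congr_ae (Eventually.of_forall fun x => ?_)
    simp only [map_mul, Complex.conj_conj]
    ring
  -- Part 2 : closability
  have part2 : ∀ (f : ℕ → D) (h : H),
      Filter.Tendsto (fun n => j (f n)) Filter.atTop (nhds 0) →
      Filter.Tendsto (fun n => A (f n)) Filter.atTop (nhds h) → h = 0 := by
    intro f h hf0 hAh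
    have horto : ∀ g : D, (inner ℂ (j g) h : ℂ) = 0 := by
      intro g
      have h1 : Tendsto (fun n => (inner ℂ (j g) (A (f n)) : ℂ)) atTop (𝓝 (inner ℂ (j g) h)) :=
        tendsto_const_nhds.inner hAh
      have h2 : Tendsto (fun n => (inner ℂ (Adag g) (j (f n)) : ℂ)) atTop (𝓝 0) := by
        have := tendsto_const_nhds.inner hf0 (𝕜 := ℂ) (f := fun _ : ℕ => Adag g)
        simpa using this
      have heq : (fun n => (inner ℂ (j g) (A (f n)) : ℂ)) =
          fun n => (inner ℂ (Adag g) (j (f n)) : ℂ) := funext fun n => part1 (f n) g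
      rw [heq] at h1
      exact tendsto_nhds_unique h1 h2
    obtain ⟨u, hu, hlim⟩ := mem_closure_iff_seq_limit.mp (hjd h)
    choose g hg using hu
    have h3 : Tendsto (fun n => (inner ℂ (u n) h : ℂ)) atTop (𝓝 (inner ℂ h h)) :=
      hlim.inner tendsto_const_nhds
    have h4 : (fun n => (inner ℂ (u n) h : ℂ)) = fun _ => 0 := by
      funext n
      rw [← hg n, horto]
    rw [h4] at h3
    have : (inner ℂ h h : ℂ) = 0 := (tendsto_nhds_unique tendsto_const_nhds h3).symm
    exact inner_self_eq_zero.mp this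
  -- the synthesis map into L²
  have hψ : ∀ g : D, MemLp (fun x => conj ((ζ x) g)) 2 μ := by
    intro g
    refine ⟨RCLike.continuous_conj.comp_aestronglyMeasurable (hL2 g).1, ?_⟩
    exact lt_of_le_of_lt (eLpNorm_mono fun x => by simp) (hL2 g).2
  set Lmap : D →ₗ[ℂ] Lp ℂ 2 μ :=
    { toFun := fun g => (hψ g).toLp _
      map_add' := by
        intro g g'
        rw [← MemLp.toLp_add (hψ g) (hψ g')]
        exact MemLp.toLp_congr _ _ (Eventually.of_forall fun x => by simp)
      map_smul' := by
        intro c g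
        show (hψ (c • g)).toLp _ = c • (hψ g).toLp _
        rw [← MemLp.toLp_const_smul c (hψ g)]
        refine MemLp.toLp_congr _ _ (Eventually.of_forall fun x => ?_)
        simp [smul_eq_mul, mul_comm] } with hLdef
  have hLcoe : ∀ g : D, (Lmap g : X → ℂ) =ᵐ[μ] fun x => conj ((ζ x) g) :=
    fun g => MemLp.coeFn_toLp (hψ g)
  -- norm identity : ‖Lmap g‖ = ‖j g‖
  have hLnorm : ∀ g : D, ‖Lmap g‖ = ‖j g‖ := by
    intro g
    have hsq : ‖Lmap g‖ ^ 2 = ‖j g‖ ^ 2 := by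
      rw [norm_sq_eq_re_inner (𝕜 := ℂ)]
      have hint : (inner ℂ (Lmap g) (Lmap g) : ℂ) =
          ∫ x, (inner ℂ ((Lmap g : X → ℂ) x) ((Lmap g : X → ℂ) x) : ℂ) ∂μ :=
        L2.inner_def (Lmap g) (Lmap g)
      have hintg : Integrable
          (fun x => (inner ℂ ((Lmap g : X → ℂ) x) ((Lmap g : X → ℂ) x) : ℂ)) μ :=
        L2.integrable_inner _ _
      rw [hint, ← integral_re hintg]
      have : ∀ᵐ x ∂μ, RCLike.re
          (inner ℂ ((Lmap g : X → ℂ) x) ((Lmap g : X → ℂ) x) : ℂ) = ‖(ζ x) g‖ ^ 2 := by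
        filter_upwards [hLcoe g] with x hx
        rw [@inner_self_eq_norm_sq ℂ, hx]
        simp
      rw [integral_congr_ae this, hPars]
    have h1 : (0:ℝ) ≤ ‖Lmap g‖ := norm_nonneg _
    have h2 : (0:ℝ) ≤ ‖j g‖ := norm_nonneg _
    nlinarith
  -- density of the range of Lmap in L²
  have hdense : Dense (LinearMap.range Lmap : Set (Lp ℂ 2 μ)) := by
    rw [Submodule.dense_iff_topologicalClosure_eq_top,
      Submodule.topologicalClosure_eq_top_iff]
    rw [Submodule.eq_bot_iff]
    intro ξ hξ
    have horth : ∀ g : D, (inner ℂ (Lmap g) ξ : ℂ) = 0 := fun g =>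
      (Submodule.mem_orthogonal _ _).mp hξ _ (LinearMap.mem_range_self _ g)
    have hξm : AEMeasurable (fun x => conj ((ξ : X → ℂ) x)) μ :=
      (RCLike.continuous_conj.measurable).comp_aemeasurable
        (Lp.aestronglyMeasurable ξ).aemeasurable
    have hint : ∀ g : D,
        Integrable (fun x => conj ((ξ : X → ℂ) x) * conj ((ζ x) g)) μ := by
      intro g
      have h0 : Integrable
          (fun x => (inner ℂ ((ξ : X → ℂ) x) ((Lmap g : X → ℂ) x) : ℂ)) μ :=
        L2.integrable_inner (𝕜 := ℂ) ξ (Lmap g)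
      refine h0.congr ?_
      filter_upwards [hLcoe g] with x hx
      rw [RCLike.inner_apply, hx, mul_comm]
    have hzero : ∀ g : D, ∫ x, conj ((ξ : X → ℂ) x) * conj ((ζ x) g) ∂μ = 0 := by
      intro g
      have h0 : (inner ℂ ξ (Lmap g) : ℂ) =
          ∫ x, (inner ℂ ((ξ : X → ℂ) x) ((Lmap g : X → ℂ) x) : ℂ) ∂μ :=
        L2.inner_def _ _
      have h1 : (inner ℂ ξ (Lmap g) : ℂ) = 0 := by
        rw [← inner_conj_symm, horth g, map_zero]
      rw [← integral_congr_ae ?_, ← h0, h1]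
      filter_upwards [hLcoe g] with x hx
      rw [RCLike.inner_apply, hx, mul_comm]
    have := hIndep _ hξm hint hzero
    have hae : (ξ : X → ℂ) =ᵐ[μ] 0 := by
      filter_upwards [this] with x hx
      simpa using congrArg conj hx
    exact Lp.eq_zero_iff_ae_eq_zero.mpr hae
  -- the key inner-product identity
  have hinner : ∀ f g : D,
      (inner ℂ (Lmap g) ((hαL2 f).toLp _) : ℂ) = (inner ℂ (j g) (A f) : ℂ) := by
    intro f g
    rw [L2.inner_def, hA f g]
    refine integral_congr_ae ?_
    filter_upwards [hLcoe g, (hαL2 f).coeFn_toLp] with x hx hwx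
    rw [RCLike.inner_apply, hx, hwx]
    simp only [RingHomCompTriple.comp_apply, RingHom.id_apply, Complex.conj_conj]
  refine ⟨part1, part2, ?_⟩
  constructor
  · -- bounded ⟹ α ∈ L^∞
    rintro ⟨C, hC, hbd⟩
    -- step A : ‖α·ψ_f‖₂ ≤ C‖j f‖
    have hWle : ∀ f : D, ‖(hαL2 f).toLp _‖ ≤ C * ‖j f‖ := by
      intro f
      refine stmt16_dense_inner_le hdense _ (by positivity) ?_
      rintro u hu
      obtain ⟨g, rfl⟩ := LinearMap.mem_range.mp hu
      rw [hinner f g]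
      calc ‖(inner ℂ (j g) (A f) : ℂ)‖ ≤ ‖j g‖ * ‖A f‖ := norm_inner_le_norm _ _
        _ ≤ ‖j g‖ * (C * ‖j f‖) := by
            have := hbd f
            have h0 : (0:ℝ) ≤ ‖j g‖ := norm_nonneg _
            nlinarith
        _ = C * ‖j f‖ * ‖Lmap g‖ := by rw [hLnorm g]; ring
    -- step B : the same bound for the eLpNorm
    have hWb : ∀ g : D, eLpNorm (fun x => α x * conj ((ζ x) g)) 2 μ ≤
        ENNReal.ofReal (C * ‖Lmap g‖) := by
      intro g
      have h1 : eLpNorm (fun x => α x * conj ((ζ x) g)) 2 μ =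
          ENNReal.ofReal ‖(hαL2 g).toLp _‖ := by
        rw [Lp.norm_toLp, ENNReal.ofReal_toReal (hαL2 g).2.ne]
      rw [h1, hLnorm g]
      exact ENNReal.ofReal_le_ofReal (hWle g)
    -- step C : indicator sets where ‖α‖ ≥ C + δ are null
    have hzero : ∀ δ : ℝ, 0 < δ → ∀ s : Set X, MeasurableSet s → μ s < ⊤ →
        s ⊆ {x | C + δ ≤ ‖α x‖} → μ s = 0 := by
      intro δ hδ s hs hμs hsub
      set φ : X → ℂ := s.indicator fun _ => 1 with hφdef
      have hφ : MemLp φ 2 μ := memLp_indicator_const 2 hs 1 (Or.inr hμs.ne)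
      set Φ : Lp ℂ 2 μ := hφ.toLp φ with hΦdef
      obtain ⟨u, hu_mem, hu_lim⟩ := mem_closure_iff_seq_limit.mp (hdense Φ)
      choose g hg using fun n => LinearMap.mem_range.mp (hu_mem n)
      have hmeas_conv : TendstoInMeasure μ (fun n => ((u n : X → ℂ))) atTop (Φ : X → ℂ) :=
        tendstoInMeasure_of_tendsto_Lp hu_lim
      obtain ⟨ns, hns_mono, hae⟩ := hmeas_conv.exists_seq_tendsto_ae
      have haeid : ∀ᵐ x ∂μ, (∀ n : ℕ, (u n : X → ℂ) x = conj ((ζ x) (g n))) ∧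
          (Φ : X → ℂ) x = φ x := by
        rw [eventually_and]
        constructor
        · rw [ae_all_iff]
          intro n
          have := hLcoe (g n)
          rw [hg n] at this
          exact this
        · exact hφ.coeFn_toLp
      have hconv : ∀ᵐ x ∂μ, Tendsto (fun i => α x * conj ((ζ x) (g (ns i)))) atTop
          (𝓝 (α x * φ x)) := by
        filter_upwards [hae, haeid] with x hx ⟨hid, hΦx⟩
        have : Tendsto (fun i => (u (ns i) : X → ℂ) x) atTop (𝓝 ((Φ : X → ℂ) x)) := hx
        simp_rw [hid, hΦx] at this
        exact this.const_mul (α x)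
      have hfatou : eLpNorm (fun x => α x * φ x) 2 μ ≤
          atTop.liminf fun i => eLpNorm (fun x => α x * conj ((ζ x) (g (ns i)))) 2 μ :=
        Lp.eLpNorm_lim_le_liminf_eLpNorm (fun i => (hαL2 (g (ns i))).1) _ hconv
      have hnormconv : Tendsto (fun i => ENNReal.ofReal (C * ‖u (ns i)‖)) atTop
          (𝓝 (ENNReal.ofReal (C * ‖Φ‖))) :=
        (ENNReal.continuous_ofReal.tendsto _).comp
          (((hu_lim.comp hns_mono.tendsto_atTop).norm).const_mul C)
      have hliminf : (atTop.liminf fun i =>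
          eLpNorm (fun x => α x * conj ((ζ x) (g (ns i)))) 2 μ) ≤
          ENNReal.ofReal (C * ‖Φ‖) := by
        rw [← hnormconv.liminf_eq]
        refine Filter.liminf_le_liminf (Eventually.of_forall fun i => ?_)
        have := hWb (g (ns i))
        rwa [hg (ns i)] at this
      have hupper : eLpNorm (fun x => α x * φ x) 2 μ ≤
          ENNReal.ofReal C * eLpNorm φ 2 μ := by
        refine (hfatou.trans hliminf).trans ?_
        rw [ENNReal.ofReal_mul hC.le]
        gcongr
        rw [Lp.norm_toLp]
        exact ENNReal.ofReal_toReal_le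
      have e1 : eLpNorm φ 2 μ = μ s ^ (1 / (2:ℝ)) := by
        rw [hφdef, eLpNorm_indicator_const hs two_ne_zero ENNReal.ofNat_ne_top]
        norm_num
      have e2 : eLpNorm (s.indicator fun _ => ((C + δ : ℝ) : ℂ)) 2 μ =
          ENNReal.ofReal (C + δ) * μ s ^ (1 / (2:ℝ)) := by
        rw [eLpNorm_indicator_const hs two_ne_zero ENNReal.ofNat_ne_top,
          ← ofReal_norm ((C + δ : ℝ) : ℂ)]
        norm_num
        rw [← ofReal_norm, show ‖(C : ℂ) + (δ : ℂ)‖ = C + δ by rw [← Complex.ofReal_add, Complex.norm_real, Real.norm_eq_abs,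
          abs_of_pos (by linarith : (0:ℝ) < C + δ)]]
      have hlower : ENNReal.ofReal (C + δ) * μ s ^ (1 / (2:ℝ)) ≤
          eLpNorm (fun x => α x * φ x) 2 μ := by
        rw [← e2]
        refine eLpNorm_mono fun x => ?_
        by_cases hx : x ∈ s
        · simp only [hφdef, Set.indicator_of_mem hx, norm_mul]
          have hCx := hsub hx
          simp only [Set.mem_setOf_eq] at hCx
          have h1 : ‖((C + δ : ℝ) : ℂ)‖ = C + δ := by
            rw [Complex.norm_real, Real.norm_eq_abs, abs_of_pos (by linarith)]
          rw [h1]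
          simpa using hCx
        · simp [hφdef, Set.indicator_of_notMem hx]
      by_contra hne
      set m : ℝ≥0∞ := μ s ^ (1 / (2:ℝ)) with hm
      have hm0 : m ≠ 0 := by
        simp [hm, ENNReal.rpow_eq_zero_iff, hne, hμs.ne]
      have hmtop : m ≠ ⊤ := ENNReal.rpow_ne_top_of_nonneg (by norm_num) hμs.ne
      have hchain : ENNReal.ofReal (C + δ) * m ≤ ENNReal.ofReal C * m := by
        calc ENNReal.ofReal (C + δ) * m ≤ eLpNorm (fun x => α x * φ x) 2 μ := hlower
          _ ≤ ENNReal.ofReal C * eLpNorm φ 2 μ := hupper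
          _ = ENNReal.ofReal C * m := by rw [e1]
      have h2 : ENNReal.ofReal (C + δ) ≤ ENNReal.ofReal C :=
        (ENNReal.mul_le_mul_iff_left hm0 hmtop).mp hchain
      rw [ENNReal.ofReal_le_ofReal_iff hC.le] at h2
      linarith
    -- step D : glue
    have hT : μ {x | C < ‖α x‖} = 0 := by
      have hsub : {x | C < ‖α x‖} ⊆
          ⋃ (n : ℕ) (N : ℕ), ({x | C + 1 / (n + 1) ≤ ‖α x‖} ∩ spanningSets μ N) := by
        intro x hx
        simp only [Set.mem_setOf_eq] at hx
        obtain ⟨n, hn⟩ := exists_nat_one_div_lt (show (0:ℝ) < ‖α x‖ - C by linarith)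
        have hxN : x ∈ ⋃ N, spanningSets μ N := by
          rw [iUnion_spanningSets]; trivial
        obtain ⟨N, hN⟩ := Set.mem_iUnion.mp hxN
        refine Set.mem_iUnion.mpr ⟨n, Set.mem_iUnion.mpr ⟨N, ⟨?_, hN⟩⟩⟩
        simp only [Set.mem_setOf_eq]
        linarith
      refine measure_mono_null hsub ?_
      refine measure_iUnion_null fun n => measure_iUnion_null fun N => ?_
      have hδ : (0:ℝ) < 1 / (n + 1) := by positivity
      refine hzero _ hδ _ ?_ ?_ ?_
      · exact (measurableSet_le measurable_const hα.norm).inter (measurableSet_spanningSets μ N)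
      · exact lt_of_le_of_lt (measure_mono Set.inter_subset_right)
          (measure_spanningSets_lt_top μ N)
      · exact fun x hx => hx.1
    refine memLp_top_of_bound hα.aestronglyMeasurable C ?_
    have : ∀ᵐ x ∂μ, ¬ (C < ‖α x‖) := by
      rw [ae_iff]
      simpa using hT
    filter_upwards [this] with x hx
    linarith [not_lt.mp hx]
  · -- α ∈ L^∞ ⟹ bounded
    intro hm
    set B : ℝ := (eLpNorm α ⊤ μ).toReal with hB
    have hB0 : 0 ≤ B := ENNReal.toReal_nonneg
    refine ⟨B + 1, by linarith, ?_⟩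
    intro f
    -- ‖α·ψ_f‖₂ ≤ B ‖ψ_f‖₂
    have hae : ∀ᵐ x ∂μ, ‖α x‖ ≤ B := by
      filter_upwards [ae_le_eLpNormEssSup (f := α) (μ := μ)] with x hx
      have h2 : (‖α x‖₊ : ℝ≥0∞) ≤ eLpNorm α ⊤ μ := by rwa [eLpNorm_exponent_top]
      have := ENNReal.toReal_mono hm.2.ne h2
      rw [hB]
      simpa using this
    have hWle : ‖(hαL2 f).toLp _‖ ≤ B * ‖Lmap f‖ := by
      rw [Lp.norm_toLp]
      have hle : eLpNorm (fun x => α x * conj ((ζ x) f)) 2 μ ≤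
          eLpNorm (B • fun x => conj ((ζ x) f)) 2 μ := by
        refine eLpNorm_mono_ae ?_
        filter_upwards [hae] with x hx
        rw [Pi.smul_apply, norm_mul, norm_smul]
        gcongr
        rw [Real.norm_eq_abs, abs_of_nonneg hB0]
        simpa using hx
      rw [eLpNorm_const_smul (B : ℝ) (fun x => conj ((ζ x) f)) 2 μ] at hle
      have hnorm : ‖Lmap f‖ = (eLpNorm (fun x => conj ((ζ x) f)) 2 μ).toReal := by
        rw [Lp.norm_def, eLpNorm_congr_ae (hLcoe f)]
      calc (eLpNorm (fun x => α x * conj ((ζ x) f)) 2 μ).toReal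
          ≤ (‖B‖₊ • eLpNorm (fun x => conj ((ζ x) f)) 2 μ).toReal := by
            refine ENNReal.toReal_mono ?_ hle
            simp [ENNReal.smul_def, ENNReal.mul_ne_top, (hψ f).2.ne]
        _ = B * ‖Lmap f‖ := by
            rw [hnorm, ENNReal.smul_def, smul_eq_mul, ENNReal.toReal_mul,
              ENNReal.coe_toReal, coe_nnnorm, Real.norm_eq_abs, abs_of_nonneg hB0]
    -- now bound ‖A f‖ via density of range j
    refine stmt16_dense_inner_le (s := Set.range j) hjd (A f) (by positivity) ?_
    rintro u ⟨g, rfl⟩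
    rw [← hinner f g]
    calc ‖(inner ℂ (Lmap g) ((hαL2 f).toLp _) : ℂ)‖
        ≤ ‖Lmap g‖ * ‖(hαL2 f).toLp _‖ := norm_inner_le_norm _ _
      _ ≤ ‖Lmap g‖ * (B * ‖Lmap f‖) := by
          have h0 : (0:ℝ) ≤ ‖Lmap g‖ := norm_nonneg _
          nlinarith
      _ ≤ (B + 1) * ‖j f‖ * ‖j g‖ := by
          rw [hLnorm g, hLnorm f]
          have h0 : (0:ℝ) ≤ ‖j g‖ := norm_nonneg _
          have h1 : (0:ℝ) ≤ ‖j f‖ := norm_nonneg _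
          nlinarith
end

section
/- Let ζ : X → D* be a Gel'fand distribution basis, A : D → D a continuous linear operator on D with formal adjoint A† : D → D, and set ω_x := (A†)× ζ_x, where (A†)× : D* → D* is the adjoint of A†. Then ω is a Bessel distribution map with ∫_X |⟨f,ω_x⟩|²dμ = ‖A†f‖² for f ∈ D, and it is atomic for A: ⟨Af,g⟩ = ∫_X ⟨f,ζ_x⟩⟨ω_x,g⟩dμ for all f,g ∈ D. -/
open MeasureTheory ComplexConjugate

/-! The conjugated coefficient map `f ↦ conj ⟨f, ζ_·⟩` is a complex-linear map `D → L²(μ)`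
which, by the Parseval identity, has the same norms as `j`. Polarization then gives
`∫ conj ⟨f, ζ_x⟩ ⟨h, ζ_x⟩ dμ = ⟪j h, j f⟫`, and both claims follow by substituting
`h = A† g`, since `⟨g, ω_x⟩ = ⟨A† g, ζ_x⟩`. -/

theorem inner_map_map_of_norm_map_eq {D E F : Type*} [AddCommGroup D] [Module ℂ D]
    [NormedAddCommGroup E] [InnerProductSpace ℂ E] [NormedAddCommGroup F] [InnerProductSpace ℂ F]
    (u : D →ₗ[ℂ] E) (v : D →ₗ[ℂ] F) (h : ∀ x, ‖u x‖ = ‖v x‖) (x y : D) :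
    (inner ℂ (u x) (u y) : ℂ) = inner ℂ (v x) (v y) := by
  simp only [inner_eq_sum_norm_sq_div_four, ← map_add, ← map_sub, ← map_smul, h]

section CoefficientMap

variable {D : Type*} [AddCommGroup D] [Module ℂ D] [TopologicalSpace D]
  {H : Type*} [NormedAddCommGroup H] [InnerProductSpace ℂ H] {j : D →L[ℂ] H}
  {X : Type*} [MeasurableSpace X] {μ : Measure X} {ζ : X → (D →SL[starRingEnd ℂ] ℂ)}

/-- The conjugate is taken so that the map is complex-linear rather than conjugate-linear. -/
noncomputable def conjCoeffL2 (hL2 : ∀ f : D, MemLp (fun x => ζ x f) 2 μ) :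
    D →ₗ[ℂ] Lp ℂ 2 μ where
  toFun f := (hL2 f).star.toLp _
  map_add' f g := by
    rw [← MemLp.toLp_add]
    exact MemLp.toLp_congr _ _ (.of_forall fun x => by simp)
  map_smul' c f := by
    rw [RingHom.id_apply, ← MemLp.toLp_const_smul]
    exact MemLp.toLp_congr _ _ (.of_forall fun x => by simp [mul_comm])

theorem inner_conjCoeffL2 (hL2 : ∀ f : D, MemLp (fun x => ζ x f) 2 μ) (f h : D) :
    (inner ℂ (conjCoeffL2 hL2 h) (conjCoeffL2 hL2 f) : ℂ) = ∫ x, conj (ζ x f) * ζ x h ∂μ := by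
  rw [L2.inner_def]
  refine integral_congr_ae ?_
  filter_upwards [(hL2 f).star.coeFn_toLp, (hL2 h).star.coeFn_toLp] with x hf hh
  simp [conjCoeffL2, hf, hh, mul_comm]

theorem norm_conjCoeffL2 (hL2 : ∀ f : D, MemLp (fun x => ζ x f) 2 μ)
    (hPars : ∀ f : D, ∫ x, ‖ζ x f‖ ^ 2 ∂μ = ‖j f‖ ^ 2) (f : D) :
    ‖conjCoeffL2 hL2 f‖ = ‖j f‖ := by
  have hsq : ‖conjCoeffL2 hL2 f‖ ^ 2 = ‖j f‖ ^ 2 := by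
    rw [← hPars, ← Complex.ofReal_inj, ← integral_complex_ofReal, Complex.ofReal_pow]
    refine (inner_self_eq_norm_sq_to_K (𝕜 := ℂ) (conjCoeffL2 hL2 f)).symm.trans ?_
    simp_rw [inner_conjCoeffL2, Complex.conj_mul', Complex.ofReal_pow]
  exact (sq_eq_sq₀ (norm_nonneg _) (norm_nonneg _)).1 hsq

theorem integral_conj_mul_eq_inner (hL2 : ∀ f : D, MemLp (fun x => ζ x f) 2 μ)
    (hPars : ∀ f : D, ∫ x, ‖ζ x f‖ ^ 2 ∂μ = ‖j f‖ ^ 2) (f h : D) :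
    ∫ x, conj (ζ x f) * ζ x h ∂μ = inner ℂ (j h) (j f) := by
  rw [← inner_conjCoeffL2 hL2]
  exact inner_map_map_of_norm_map_eq _ j.toLinearMap (norm_conjCoeffL2 hL2 hPars) h f

end CoefficientMap

theorem stmt17_general
    {D : Type*} [AddCommGroup D] [Module ℂ D] [TopologicalSpace D]
    {H : Type*} [NormedAddCommGroup H] [InnerProductSpace ℂ H]
    (j : D →L[ℂ] H)
    {X : Type*} [MeasurableSpace X] (μ : Measure X)
    (ζ : X → (D →SL[starRingEnd ℂ] ℂ))
    (hL2 : ∀ f : D, MemLp (fun x => (ζ x) f) 2 μ)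
    (hPars : ∀ f : D, ∫ x, ‖(ζ x) f‖ ^ 2 ∂μ = ‖j f‖ ^ 2)
    (A Adag : D →L[ℂ] D)
    (hadj : ∀ f g : D, (inner ℂ (j g) (j (A f)) : ℂ) = (inner ℂ (j (Adag g)) (j f) : ℂ))
    (ω : X → (D →SL[starRingEnd ℂ] ℂ))
    (hω : ∀ (x : X) (g : D), (ω x) g = (ζ x) (Adag g)) :
    (∀ f : D, MemLp (fun x => (ω x) f) 2 μ ∧
      ∫ x, ‖(ω x) f‖ ^ 2 ∂μ = ‖j (Adag f)‖ ^ 2) ∧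
    (∀ f g : D, (inner ℂ (j g) (j (A f)) : ℂ) = ∫ x, conj ((ζ x) f) * (ω x) g ∂μ) := by
  simp only [hω]
  exact ⟨fun f => ⟨hL2 (Adag f), hPars (Adag f)⟩,
    fun f g => by rw [hadj, integral_conj_mul_eq_inner hL2 hPars]⟩

/-- For a Gel'fand distribution basis `ζ`, a continuous operator `A : D → D`
with formal adjoint `A† : D → D`, the map `ω_x := (A†)× ζ_x` (i.e. `ω_x = ζ_x ∘ A†`) is a
Bessel distribution map with `∫|⟨f,ω_x⟩|²dμ = ‖A†f‖²`, and is atomic for `A`: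
`⟨Af,g⟩ = ∫ ⟨f,ζ_x⟩⟨ω_x,g⟩dμ` for all `f,g ∈ D`. -/
theorem stmt17
    {D : Type*} [AddCommGroup D] [Module ℂ D] [TopologicalSpace D] [IsTopologicalAddGroup D]
    [ContinuousSMul ℂ D]
    {H : Type*} [NormedAddCommGroup H] [InnerProductSpace ℂ H] [CompleteSpace H]
    (j : D →L[ℂ] H) (hj : Function.Injective j) (hjd : DenseRange j)
    {X : Type*} [MeasurableSpace X] (μ : Measure X) [SigmaFinite μ]
    (ζ : X → (D →SL[starRingEnd ℂ] ℂ))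
    (hmeas : ∀ f : D, Measurable fun x => (ζ x) f)
    (hL2 : ∀ f : D, MemLp (fun x => (ζ x) f) 2 μ)
    (hPars : ∀ f : D, ∫ x, ‖(ζ x) f‖ ^ 2 ∂μ = ‖j f‖ ^ 2)
    (hIndep : ∀ ξ : X → ℂ, AEMeasurable ξ μ →
      (∀ g : D, Integrable (fun x => ξ x * conj ((ζ x) g)) μ) →
      (∀ g : D, ∫ x, ξ x * conj ((ζ x) g) ∂μ = 0) → ξ =ᵐ[μ] 0)
    (A Adag : D →L[ℂ] D)
    (hadj : ∀ f g : D, (inner ℂ (j g) (j (A f)) : ℂ) = (inner ℂ (j (Adag g)) (j f) : ℂ))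
    (ω : X → (D →SL[starRingEnd ℂ] ℂ))
    (hω : ∀ (x : X) (g : D), (ω x) g = (ζ x) (Adag g)) :
    (∀ f : D, MemLp (fun x => (ω x) f) 2 μ ∧
      ∫ x, ‖(ω x) f‖ ^ 2 ∂μ = ‖j (Adag f)‖ ^ 2) ∧
    (∀ f g : D, (inner ℂ (j g) (j (A f)) : ℂ) = ∫ x, conj ((ζ x) f) * (ω x) g ∂μ) :=
  stmt17_general j μ ζ hL2 hPars A Adag hadj ω hω
end

section
/- Let D be a reflexive Fréchet space in a rigged Hilbert space D ⊂ H ⊂ D*, let ω be a distribution frame with frame operator S_ω ∈ L(D,D*), and let R_ω ∈ L(D) satisfy S_ω R_ω f = R_ω× S_ω f = f for all f ∈ D. Define θ_x := R_ω× ω_x. Then ⟨f,g⟩ = ∫_X ⟨f,θ_x⟩⟨ω_x,g⟩dμ for all f,g ∈ D, θ is a Bessel distribution map, and its frame operator satisfies S_θ = I_{D,D*} R_ω; moreover B⁻¹‖f‖² ≤ ⟨S_θ f, f⟩ ≤ A⁻¹‖f‖² for all f ∈ D, so θ is a distribution frame (the canonical dual frame). -/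
/-!
Composing the reconstruction identity `S_ω R_ω = I` with `θ_x = ω_x ∘ R_ω` gives the first three
claims directly. For the frame bounds, `t := ∫ |⟨f, θ_x⟩|² dμ = ⟨R_ω f, f⟩`. The lower frame bound
of `ω` applied to `R_ω f` together with Cauchy–Schwarz in `H` gives `A ‖R_ω f‖ ≤ ‖f‖`, hence
`t ≤ A⁻¹ ‖f‖²`; Cauchy–Schwarz in `L²(μ)` applied to `‖f‖² = ∫ conj ⟨R_ω f, ω_x⟩ ⟨f, ω_x⟩ dμ`
and the upper frame bound of `ω` give `‖f‖⁴ ≤ B ‖f‖² t`, hence `B⁻¹ ‖f‖² ≤ t`.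
-/

open MeasureTheory ComplexConjugate

section CauchySchwarz

variable {X 𝕜 : Type*} [MeasurableSpace X] {μ : Measure X} [RCLike 𝕜]

theorem integral_conj_mul_self (f : X → 𝕜) :
    ∫ x, conj (f x) * f x ∂μ = ((∫ x, ‖f x‖ ^ 2 ∂μ : ℝ) : 𝕜) := by
  simp_rw [RCLike.conj_mul, ← RCLike.ofReal_pow]
  exact integral_ofReal

theorem MeasureTheory.MemLp.inner_toLp_two {f g : X → 𝕜} (hf : MemLp f 2 μ) (hg : MemLp g 2 μ) :
    (inner 𝕜 (hf.toLp f) (hg.toLp g) : 𝕜) = ∫ x, conj (f x) * g x ∂μ := by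
  rw [L2.inner_def]
  refine integral_congr_ae ?_
  filter_upwards [hf.coeFn_toLp, hg.coeFn_toLp] with x hfx hgx
  rw [RCLike.inner_apply, hfx, hgx, mul_comm]

theorem MeasureTheory.MemLp.norm_toLp_two_sq {f : X → 𝕜} (hf : MemLp f 2 μ) :
    ‖hf.toLp f‖ ^ 2 = ∫ x, ‖f x‖ ^ 2 ∂μ := by
  rw [norm_sq_eq_re_inner (𝕜 := 𝕜), hf.inner_toLp_two hf, integral_conj_mul_self,
    RCLike.ofReal_re]

theorem sq_norm_integral_conj_mul_le {f g : X → 𝕜} (hf : MemLp f 2 μ) (hg : MemLp g 2 μ) :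
    ‖∫ x, conj (f x) * g x ∂μ‖ ^ 2 ≤ (∫ x, ‖f x‖ ^ 2 ∂μ) * ∫ x, ‖g x‖ ^ 2 ∂μ := by
  rw [← hf.inner_toLp_two hg, ← hf.norm_toLp_two_sq, ← hg.norm_toLp_two_sq, ← mul_pow]
  exact pow_le_pow_left₀ (norm_nonneg _) (norm_inner_le_norm _ _) 2

end CauchySchwarz

theorem re_inner_le_inv_mul_norm_sq {𝕜 E : Type*} [RCLike 𝕜] [NormedAddCommGroup E]
    [InnerProductSpace 𝕜 E] {A : ℝ} (hA : 0 < A) {u v : E}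
    (h : A * ‖u‖ ^ 2 ≤ RCLike.re (inner 𝕜 u v)) :
    RCLike.re (inner 𝕜 u v) ≤ A⁻¹ * ‖v‖ ^ 2 := by
  have hcs : RCLike.re (inner 𝕜 u v) ≤ ‖u‖ * ‖v‖ := re_inner_le_norm u v
  have hAu : A * ‖u‖ ≤ ‖v‖ := by
    rcases (norm_nonneg u).eq_or_lt with hu | hu
    · simp [← hu]
    · exact le_of_mul_le_mul_right (by nlinarith) hu
  rw [le_inv_mul_iff₀ hA]
  calc A * RCLike.re (inner 𝕜 u v) ≤ A * ‖u‖ * ‖v‖ := by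
        rw [mul_assoc]; exact mul_le_mul_of_nonneg_left hcs hA.le
    _ ≤ ‖v‖ * ‖v‖ := mul_le_mul_of_nonneg_right hAu (norm_nonneg v)
    _ = ‖v‖ ^ 2 := (sq _).symm

theorem inv_mul_le_of_mul_self_le {B s t : ℝ} (hB : 0 < B) (hs : 0 ≤ s) (ht : 0 ≤ t)
    (h : s * s ≤ B * t * s) : B⁻¹ * s ≤ t := by
  rw [inv_mul_le_iff₀ hB]
  rcases hs.eq_or_lt with hs | hs
  · simp [← hs, mul_nonneg hB.le ht]
  · exact le_of_mul_le_mul_right h hs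

section DualFrame

variable {D H X : Type*} [NormedAddCommGroup H] [InnerProductSpace ℂ H] [MeasurableSpace X]
  {μ : Measure X} {ω : X → D → ℂ} {j : D → H} {R : D → D}

theorem dual_frame_integral_eq_re_inner
    (hrec : ∀ f g, ∫ x, conj (ω x (R f)) * ω x g ∂μ = (inner ℂ (j g) (j f) : ℂ)) (f : D) :
    ∫ x, ‖ω x (R f)‖ ^ 2 ∂μ = RCLike.re (inner ℂ (j (R f)) (j f)) := by
  rw [← hrec, integral_conj_mul_self fun x => ω x (R f), RCLike.ofReal_re]

theorem dual_frame_upper_bound {A : ℝ} (hA : 0 < A)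
    (hlower : ∀ f, A * ‖j f‖ ^ 2 ≤ ∫ x, ‖ω x f‖ ^ 2 ∂μ)
    (hrec : ∀ f g, ∫ x, conj (ω x (R f)) * ω x g ∂μ = (inner ℂ (j g) (j f) : ℂ)) (f : D) :
    ∫ x, ‖ω x (R f)‖ ^ 2 ∂μ ≤ A⁻¹ * ‖j f‖ ^ 2 := by
  have ht := dual_frame_integral_eq_re_inner hrec f
  rw [ht]
  exact re_inner_le_inv_mul_norm_sq hA (ht ▸ hlower (R f))

theorem dual_frame_lower_bound {B : ℝ} (hB : 0 < B) (hL2 : ∀ f, MemLp (fun x => ω x f) 2 μ)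
    (hupper : ∀ f, ∫ x, ‖ω x f‖ ^ 2 ∂μ ≤ B * ‖j f‖ ^ 2)
    (hrec : ∀ f g, ∫ x, conj (ω x (R f)) * ω x g ∂μ = (inner ℂ (j g) (j f) : ℂ)) (f : D) :
    B⁻¹ * ‖j f‖ ^ 2 ≤ ∫ x, ‖ω x (R f)‖ ^ 2 ∂μ := by
  have ht : 0 ≤ ∫ x, ‖ω x (R f)‖ ^ 2 ∂μ := integral_nonneg fun x => sq_nonneg _
  have hnorm : ‖∫ x, conj (ω x (R f)) * ω x f ∂μ‖ = ‖j f‖ ^ 2 := by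
    rw [hrec, inner_self_eq_norm_sq_to_K]
    simp
  have hcs := sq_norm_integral_conj_mul_le (hL2 (R f)) (hL2 f)
  rw [hnorm] at hcs
  refine inv_mul_le_of_mul_self_le hB (sq_nonneg _) ht ?_
  calc ‖j f‖ ^ 2 * ‖j f‖ ^ 2 = (‖j f‖ ^ 2) ^ 2 := by ring
    _ ≤ (∫ x, ‖ω x (R f)‖ ^ 2 ∂μ) * ∫ x, ‖ω x f‖ ^ 2 ∂μ := hcs
    _ ≤ (∫ x, ‖ω x (R f)‖ ^ 2 ∂μ) * (B * ‖j f‖ ^ 2) := mul_le_mul_of_nonneg_left (hupper f) ht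
    _ = B * (∫ x, ‖ω x (R f)‖ ^ 2 ∂μ) * ‖j f‖ ^ 2 := by ring

end DualFrame

theorem stmt19_general
    {D : Type*} [AddCommGroup D] [Module ℂ D] [UniformSpace D]
    {H : Type*} [NormedAddCommGroup H] [InnerProductSpace ℂ H]
    (j : D →L[ℂ] H)
    {X : Type*} [MeasurableSpace X] (μ : Measure X)
    (ω : X → (D →SL[starRingEnd ℂ] ℂ))
    (hL2 : ∀ f : D, MemLp (fun x => (ω x) f) 2 μ)
    (A B : ℝ) (hA : 0 < A) (hAB : A ≤ B)
    (hframe : ∀ f : D, A * ‖j f‖ ^ 2 ≤ ∫ x, ‖(ω x) f‖ ^ 2 ∂μ ∧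
        ∫ x, ‖(ω x) f‖ ^ 2 ∂μ ≤ B * ‖j f‖ ^ 2)
    (S : D →L[ℂ] (D →SL[starRingEnd ℂ] ℂ))
    (hS : ∀ f g : D, (S f) g = ∫ x, conj ((ω x) f) * (ω x) g ∂μ)
    (R : D →L[ℂ] D)
    (hR1 : ∀ f g : D, (S (R f)) g = (inner ℂ (j g) (j f) : ℂ))
    (hR2 : ∀ f g : D, (S f) (R g) = (inner ℂ (j g) (j f) : ℂ))
    (θ : X → (D →SL[starRingEnd ℂ] ℂ))
    (hθ : ∀ (x : X) (g : D), (θ x) g = (ω x) (R g)) :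
    (∀ f g : D, (inner ℂ (j g) (j f) : ℂ) = ∫ x, conj ((θ x) f) * (ω x) g ∂μ) ∧
    (∀ f : D, MemLp (fun x => (θ x) f) 2 μ) ∧
    (∀ f g : D, ∫ x, conj ((θ x) f) * (θ x) g ∂μ = (inner ℂ (j g) (j (R f)) : ℂ)) ∧
    (∀ f : D, B⁻¹ * ‖j f‖ ^ 2 ≤ ∫ x, ‖(θ x) f‖ ^ 2 ∂μ ∧
      ∫ x, ‖(θ x) f‖ ^ 2 ∂μ ≤ A⁻¹ * ‖j f‖ ^ 2) := by
  have hrec : ∀ f g, ∫ x, conj (ω x (R f)) * ω x g ∂μ = (inner ℂ (j g) (j f) : ℂ) :=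
    fun f g => by rw [← hS, hR1]
  simp_rw [hθ]
  refine ⟨fun f g => (hrec f g).symm, fun f => hL2 (R f), fun f g => by rw [← hS, hR2],
    fun f => ⟨?_, ?_⟩⟩
  · exact dual_frame_lower_bound (hA.trans_le hAB) hL2 (fun f => (hframe f).2) hrec f
  · exact dual_frame_upper_bound hA (fun f => (hframe f).1) hrec f

/-- Let `ω` be a distribution frame with frame operator `S_ω ∈ L(D,D*)` and
let `R_ω ∈ L(D)` satisfy `S_ω R_ω = R_ω× S_ω = I_{D,D*}`. Then `θ_x := R_ω× ω_x`
(i.e. `θ_x = ω_x ∘ R_ω`) satisfies the reconstruction formula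
`⟨f,g⟩ = ∫ ⟨f,θ_x⟩⟨ω_x,g⟩dμ`, is a Bessel distribution map, its frame operator is
`S_θ = I_{D,D*} R_ω`, and `B⁻¹‖f‖² ≤ ⟨S_θ f,f⟩ = ∫|⟨f,θ_x⟩|²dμ ≤ A⁻¹‖f‖²`, so `θ` is a
distribution frame (the canonical dual frame). -/
theorem stmt19
    {D : Type*} [AddCommGroup D] [Module ℂ D] [UniformSpace D] [IsUniformAddGroup D]
    [ContinuousSMul ℂ D] [CompleteSpace D] [TopologicalSpace.MetrizableSpace D]
    [Module ℝ D] [IsScalarTower ℝ ℂ D] [LocallyConvexSpace ℝ D]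
    {H : Type*} [NormedAddCommGroup H] [InnerProductSpace ℂ H] [CompleteSpace H]
    (j : D →L[ℂ] H) (hj : Function.Injective j) (hjd : DenseRange j)
    (hrefl : ∀ φ : (D →SL[starRingEnd ℂ] ℂ) →L[ℂ] ℂ, ∃ f : D,
      ∀ Φ : D →SL[starRingEnd ℂ] ℂ, φ Φ = Φ f)
    {X : Type*} [MeasurableSpace X] (μ : Measure X) [SigmaFinite μ]
    (ω : X → (D →SL[starRingEnd ℂ] ℂ))
    (hmeas : ∀ f : D, Measurable fun x => (ω x) f)
    (hL2 : ∀ f : D, MemLp (fun x => (ω x) f) 2 μ)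
    (A B : ℝ) (hA : 0 < A) (hAB : A ≤ B)
    (hframe : ∀ f : D, A * ‖j f‖ ^ 2 ≤ ∫ x, ‖(ω x) f‖ ^ 2 ∂μ ∧
        ∫ x, ‖(ω x) f‖ ^ 2 ∂μ ≤ B * ‖j f‖ ^ 2)
    (S : D →L[ℂ] (D →SL[starRingEnd ℂ] ℂ))
    (hS : ∀ f g : D, (S f) g = ∫ x, conj ((ω x) f) * (ω x) g ∂μ)
    (R : D →L[ℂ] D)
    (hR1 : ∀ f g : D, (S (R f)) g = (inner ℂ (j g) (j f) : ℂ))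
    (hR2 : ∀ f g : D, (S f) (R g) = (inner ℂ (j g) (j f) : ℂ))
    (θ : X → (D →SL[starRingEnd ℂ] ℂ))
    (hθ : ∀ (x : X) (g : D), (θ x) g = (ω x) (R g)) :
    (∀ f g : D, (inner ℂ (j g) (j f) : ℂ) = ∫ x, conj ((θ x) f) * (ω x) g ∂μ) ∧
    (∀ f : D, MemLp (fun x => (θ x) f) 2 μ) ∧
    (∀ f g : D, ∫ x, conj ((θ x) f) * (θ x) g ∂μ = (inner ℂ (j g) (j (R f)) : ℂ)) ∧
    (∀ f : D, B⁻¹ * ‖j f‖ ^ 2 ≤ ∫ x, ‖(θ x) f‖ ^ 2 ∂μ ∧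
      ∫ x, ‖(θ x) f‖ ^ 2 ∂μ ≤ A⁻¹ * ‖j f‖ ^ 2) :=
  stmt19_general j μ ω hL2 A B hA hAB hframe S hS R hR1 hR2 θ hθ
end
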